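/- arXiv:2404.06684 — 8 statements merged into one kernel-verified Lean document; each statement's English description precedes it below -/
import Mathlib

section
/- Let x_0 = 0, x_1, …, x_m be distinct points of the weighted Hamming cube H_W, and let D be their distance matrix. Let u ∈ ℝ^m be the vector with u_i = ‖x_i‖₁ = ∑_k |x_i k|, and let G_W be the m×m matrix with (G_W) i j = ∑_k (x_i k)(x_j k)/(w k). Then det D = (−1)^{m−1} · 2^{m−1} · det of the (m+1)×(m+1) bordered matrix whose top-left entry is 0, whose first row (after the corner) is uᵀ, whose first column (after the corner) is u, and whose lower-right m×m block is G_W. -/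
open Matrix

/-- Determinant of the distance matrix of a subset of a weighted Hamming cube
containing `0`, in terms of the bordered Gram matrix. -/
theorem stmt2 (n m : ℕ) (hn : 1 ≤ n) (w : Fin n → ℝ) (hw : ∀ k, 0 < w k)
    (x : Fin (m + 1) → (Fin n → ℝ))
    (hx0 : x 0 = 0)
    (hxH : ∀ i k, x i k = 0 ∨ x i k = w k)
    (hinj : Function.Injective x)
    (D : Matrix (Fin (m + 1)) (Fin (m + 1)) ℝ)
    (hD : ∀ i j, D i j = ∑ k, |x i k - x j k|)
    (u : Fin m → ℝ) (hu : ∀ i, u i = ∑ k, |x i.succ k|)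
    (G : Matrix (Fin m) (Fin m) ℝ)
    (hG : ∀ i j, G i j = ∑ k, x i.succ k * x j.succ k / w k) :
    D.det = (-1 : ℝ) ^ (m - 1) * 2 ^ (m - 1) *
      (Matrix.fromBlocks (0 : Matrix (Fin 1) (Fin 1) ℝ)
        (Matrix.of fun _ j => u j) (Matrix.of fun i _ => u i) G).det := by
  have hwne : ∀ k, (w k : ℝ) ≠ 0 := fun k => (hw k).ne'
  -- key pointwise distance formula
  have key : ∀ i j, D i j
      = (∑ k, |x i k|) + (∑ k, |x j k|) - 2 * ∑ k, x i k * x j k / w k := by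
    intro i j
    rw [hD, Finset.mul_sum, ← Finset.sum_add_distrib, ← Finset.sum_sub_distrib]
    refine Finset.sum_congr rfl fun k _ => ?_
    rcases hxH i k with h1 | h1 <;> rcases hxH j k with h2 | h2 <;>
      rw [h1, h2] <;>
      simp only [sub_zero, zero_sub, sub_self, abs_zero, abs_neg, mul_zero,
        zero_mul, zero_div, abs_of_nonneg (hw k).le, mul_div_assoc,
        div_self (hwne k)] <;> ring
  have hD00 : D 0 0 = 0 := by
    rw [hD, hx0]; simp
  have hD0 : ∀ j : Fin m, D 0 j.succ = u j := by
    intro j; rw [hD, hx0, hu]; simp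
  have hDj0 : ∀ i : Fin m, D i.succ 0 = u i := by
    intro i; rw [hD, hx0, hu]; simp
  have hDss : ∀ i j : Fin m, D i.succ j.succ = u i + u j - 2 * G i j := by
    intro i j; rw [key, hu, hu, hG]
  set B := Matrix.fromBlocks (0 : Matrix (Fin 1) (Fin 1) ℝ)
      (Matrix.of fun _ j => u j) (Matrix.of fun i _ => u i) G with hB
  let e : Fin 1 ⊕ Fin m ≃ Fin (m + 1) :=
    { toFun := Sum.elim (fun _ => 0) Fin.succ
      invFun := fun i => Fin.cases (Sum.inl 0) Sum.inr i
      left_inv := by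
        rintro (a | i)
        · simp [Subsingleton.elim a 0]
        · simp
      right_inv := by
        intro i
        cases i using Fin.cases <;> simp }
  let M1 : Matrix (Fin 1 ⊕ Fin m) (Fin 1 ⊕ Fin m) ℝ :=
    Matrix.fromBlocks 1 0 (Matrix.of fun _ _ => (1 : ℝ)) ((-2 : ℝ) • 1)
  let M2 : Matrix (Fin 1 ⊕ Fin m) (Fin 1 ⊕ Fin m) ℝ :=
    Matrix.fromBlocks ((-1/2 : ℝ) • 1) (Matrix.of fun _ _ => (-1/2 : ℝ)) 0 1
  have heq : M1 * B * M2 = D.submatrix e e := by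
    rw [hB]
    show Matrix.fromBlocks 1 0 (Matrix.of fun _ _ => (1 : ℝ)) ((-2 : ℝ) • 1) *
      _ * Matrix.fromBlocks ((-1/2 : ℝ) • 1) (Matrix.of fun _ _ => (-1/2 : ℝ)) 0 1 = _
    rw [Matrix.fromBlocks_multiply, Matrix.fromBlocks_multiply]
    ext i j
    rcases i with a | i <;> rcases j with b | j
    · simp [Matrix.mul_apply, e, Subsingleton.elim a 0, Subsingleton.elim b 0, hD00]
    · simp [Matrix.mul_apply, e, Subsingleton.elim a 0, hD0, Matrix.one_apply]
    · simp [Matrix.mul_apply, e, Subsingleton.elim b 0, hDj0, Matrix.one_apply]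
      ring
    · simp [Matrix.mul_apply, e, hDss, Matrix.one_apply, Finset.mul_sum,
        mul_ite, ite_mul]
      ring
  have hdetM1 : M1.det = (-2 : ℝ) ^ m := by
    show (Matrix.fromBlocks 1 0 (Matrix.of fun _ _ => (1 : ℝ)) ((-2 : ℝ) • 1)).det = _
    rw [Matrix.det_fromBlocks_zero₁₂, Matrix.det_smul, Matrix.det_one,
      Matrix.det_one, Fintype.card_fin]
    ring
  have hdetM2 : M2.det = (-1/2 : ℝ) := by
    show (Matrix.fromBlocks ((-1/2 : ℝ) • 1) (Matrix.of fun _ _ => (-1/2 : ℝ)) 0 1).det = _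
    rw [Matrix.det_fromBlocks_zero₂₁, Matrix.det_smul, Matrix.det_one,
      Matrix.det_one, Fintype.card_fin]
    ring
  have hDdet : D.det = (-2 : ℝ) ^ m * (-1/2) * B.det := by
    rw [← Matrix.det_submatrix_equiv_self e D, ← heq]
    rw [Matrix.det_mul, Matrix.det_mul, hdetM1, hdetM2]
    ring
  cases m with
  | zero =>
      have h1 : (Matrix.of fun (_ : Fin 1) (j : Fin 0) => u j) = 0 := by
        ext i j; exact j.elim0
      have hB0 : B.det = 0 := by
        rw [hB, h1, Matrix.det_fromBlocks_zero₁₂]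
        simp [Matrix.det_fin_one]
      rw [hDdet, hB0]; ring
  | succ m' =>
      rw [hDdet]
      have : (-2 : ℝ) ^ (m' + 1) = (-1 : ℝ) ^ (m' + 1) * 2 ^ (m' + 1) := by
        rw [← neg_one_mul, mul_pow]
      rw [this]
      simp [pow_succ]
      ring
end

section
/- Let x_0 = 0, x_1, …, x_n be distinct points of the weighted Hamming cube H_W ⊆ ℝⁿ (so there are n+1 points in ℝⁿ) forming an affinely independent family, and let D be their distance matrix. Let B̂ be the n×n matrix whose (i,k) entry is (x_i k)/(w k) (which lies in {0,1}). Then det D = (−1)^n · 2^{n−1} · (∏_k w k) · (∑_k w k) · (det B̂)². -/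
/-!
Writing `β i k = x i k / w k ∈ {0, 1}`, the identity `|a - b| = a + b - 2ab` on `{0, 1}` turns
the distance matrix into `L K Lᵀ`, where `L = [1 | β]` and `K = [[0, wᵀ], [w, -2 diag w]]`.
Since `x 0 = 0`, the matrix `L` is block lower triangular with diagonal blocks `1` and `B̂`, so
`det D = (det B̂)² det K`, and `det K` is a Schur complement computation.
-/

open Matrix

section

variable {ι κ R : Type*} [Fintype κ] [DecidableEq κ] [CommRing R]

/-- When `β` has entries in `{0, 1}`, this is the distance matrix of the rows of `β` for the
`ℓ¹` metric with weights `w`. -/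
def weightedHammingMatrix (w : κ → R) (β : Matrix ι κ R) : Matrix ι ι R :=
  of fun i j => ∑ k, w k * (β i k + β j k - 2 * (β i k * β j k))

def borderedDiagonal (w : κ → R) : Matrix (Unit ⊕ κ) (Unit ⊕ κ) R :=
  fromBlocks 0 (replicateRow Unit w) (replicateCol Unit w) (diagonal fun k => -2 * w k)

theorem weightedHammingMatrix_eq_mul (w : κ → R) (β : Matrix ι κ R) :
    weightedHammingMatrix w β =
      fromCols (replicateCol Unit 1) β * borderedDiagonal w *
        (fromCols (replicateCol Unit 1) β)ᵀ := by
  ext i j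
  simp [weightedHammingMatrix, borderedDiagonal, mul_apply, Fintype.sum_sum_type, diagonal_apply,
    ← Finset.sum_add_distrib]
  exact Finset.sum_congr rfl fun k _ => by ring

theorem det_weightedHammingMatrix_fromRows_zero (w : κ → R) (B : Matrix κ κ R) :
    (weightedHammingMatrix w (fromRows (0 : Matrix Unit κ R) B)).det =
      B.det ^ 2 * (borderedDiagonal w).det := by
  have hL : fromCols (replicateCol Unit 1) (fromRows (0 : Matrix Unit κ R) B) =
      fromBlocks 1 0 (replicateCol Unit 1) B := by
    ext (_ | _) (_ | _) <;> simp [one_apply]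
  rw [weightedHammingMatrix_eq_mul, det_mul, det_mul, det_transpose, hL, det_fromBlocks_zero₁₂,
    det_one]
  ring

end

theorem det_borderedDiagonal {κ K : Type*} [Fintype κ] [DecidableEq κ] [Field K] (w : κ → K)
    (hw : ∀ k, w k ≠ 0) (h2 : (2 : K) ≠ 0) :
    (borderedDiagonal w).det = (-2) ^ Fintype.card κ * (∏ k, w k) * ((∑ k, w k) / 2) := by
  have hd : ∀ k, -2 * w k ≠ 0 := fun k => mul_ne_zero (neg_ne_zero.2 h2) (hw k)
  let _ : Invertible (diagonal fun k => -2 * w k) :=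
    ⟨diagonal fun k => (-2 * w k)⁻¹,
      by rw [diagonal_mul_diagonal, ← diagonal_one]; simp only [inv_mul_cancel₀ (hd _)],
      by rw [diagonal_mul_diagonal, ← diagonal_one]; simp only [mul_inv_cancel₀ (hd _)]⟩
  have hinv : ⅟(diagonal fun k => -2 * w k) = diagonal fun k => (-2 * w k)⁻¹ := rfl
  have hentry : ∀ k, w k * (-2 * w k)⁻¹ * w k = -(w k / 2) := fun k => by field_simp
  rw [borderedDiagonal, det_fromBlocks₂₂, hinv, det_diagonal, Finset.prod_mul_distrib,
    Finset.prod_const, Finset.card_univ]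
  simp only [det_unique, Matrix.sub_apply, Matrix.zero_apply, mul_apply, replicateRow_apply,
    replicateCol_apply, diagonal_apply, mul_ite, mul_zero, Finset.sum_ite_eq',
    Finset.mem_univ, if_true, hentry, Finset.sum_neg_distrib, ← Finset.sum_div]
  ring

theorem abs_sub_eq_of_eq_zero_or_eq {a b c : ℝ} (ha : a = 0 ∨ a = c) (hb : b = 0 ∨ b = c)
    (hc : 0 < c) : |a - b| = c * (a / c + b / c - 2 * (a / c * (b / c))) := by
  rcases ha with rfl | rfl <;> rcases hb with rfl | rfl <;>
    norm_num [hc.ne', abs_of_pos hc]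

theorem stmt4_general (n : ℕ) (hn : 1 ≤ n) (w : Fin n → ℝ) (hw : ∀ k, 0 < w k)
    (x : Fin (n + 1) → (Fin n → ℝ))
    (hx0 : x 0 = 0)
    (hxH : ∀ i k, x i k = 0 ∨ x i k = w k)
    (D : Matrix (Fin (n + 1)) (Fin (n + 1)) ℝ)
    (hD : ∀ i j, D i j = ∑ k, |x i k - x j k|)
    (B : Matrix (Fin n) (Fin n) ℝ)
    (hB : ∀ i k, B i k = x i.succ k / w k) :
    D.det = (-1 : ℝ) ^ n * 2 ^ (n - 1) * (∏ k, w k) * (∑ k, w k) * B.det ^ 2 := by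
  let e : Unit ⊕ Fin n ≃ Fin (n + 1) :=
    (Equiv.sumComm _ _).trans ((Equiv.optionEquivSumPUnit _).symm.trans (finSuccEquiv n).symm)
  have hβ : ∀ a k, fromRows (0 : Matrix Unit (Fin n) ℝ) B a k = x (e a) k / w k := by
    rintro (_ | i) k <;> simp [e, hB, hx0]
  have hDe : D.submatrix e e = weightedHammingMatrix w (fromRows 0 B) := by
    ext a b
    simp only [submatrix_apply, hD, weightedHammingMatrix, of_apply, hβ]
    exact Finset.sum_congr rfl fun k _ => abs_sub_eq_of_eq_zero_or_eq (hxH _ k) (hxH _ k) (hw k)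
  have h2 : (2 : ℝ) ^ (n - 1) * 2 = 2 ^ n := by rw [← pow_succ, Nat.sub_add_cancel hn]
  rw [← det_submatrix_equiv_self e, hDe, det_weightedHammingMatrix_fromRows_zero,
    det_borderedDiagonal w (fun k => (hw k).ne') two_ne_zero, Fintype.card_fin, neg_pow, ← h2]
  ring

/-- Graham--Pollak type formula for the determinant of the distance matrix of an
affinely independent `(n+1)`-point subset of a weighted Hamming cube containing `0`. -/
theorem stmt4 (n : ℕ) (hn : 1 ≤ n) (w : Fin n → ℝ) (hw : ∀ k, 0 < w k)
    (x : Fin (n + 1) → (Fin n → ℝ))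
    (hx0 : x 0 = 0)
    (hxH : ∀ i k, x i k = 0 ∨ x i k = w k)
    (hinj : Function.Injective x)
    (haff : AffineIndependent ℝ x)
    (D : Matrix (Fin (n + 1)) (Fin (n + 1)) ℝ)
    (hD : ∀ i j, D i j = ∑ k, |x i k - x j k|)
    (B : Matrix (Fin n) (Fin n) ℝ)
    (hB : ∀ i k, B i k = x i.succ k / w k) :
    D.det = (-1 : ℝ) ^ n * 2 ^ (n - 1) * (∏ k, w k) * (∑ k, w k) * B.det ^ 2 :=
  stmt4_general n hn w hw x hx0 hxH D hD B hB
end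

section
/- Let x_0, …, x_m (m ≥ 1) be distinct points of the weighted Hamming cube H_W. Then the metric space {x_0,…,x_m} is of strict 1-negative type if and only if the family (x_0,…,x_m) is affinely independent in ℝⁿ. -/
lemma quad_key (ι : Type*) [Fintype ι] (a ξ : ι → ℝ) (hξ : ∑ i, ξ i = 0) :
    ∑ i, ∑ j, (a i - a j)^2 * ξ i * ξ j = -2 * (∑ i, a i * ξ i)^2 := by
  have h : ∑ i, ∑ j, (a i - a j)^2 * ξ i * ξ j
      = (∑ i, a i^2 * ξ i) * (∑ j, ξ j) - 2 * ((∑ i, a i * ξ i) * (∑ j, a j * ξ j))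
        + (∑ i, ξ i) * (∑ j, a j^2 * ξ j) := by
    rw [Finset.sum_mul_sum, Finset.sum_mul_sum, Finset.sum_mul_sum, Finset.mul_sum]
    rw [← Finset.sum_sub_distrib, ← Finset.sum_add_distrib]
    refine Finset.sum_congr rfl fun i _ => ?_
    rw [Finset.mul_sum, ← Finset.sum_sub_distrib, ← Finset.sum_add_distrib]
    refine Finset.sum_congr rfl fun j _ => ?_
    ring
  rw [h, hξ]; ring

/-- A nontrivial subset of a weighted Hamming cube is of strict 1-negative type
iff it is affinely independent. -/
theorem stmt5 (n m : ℕ) (hn : 1 ≤ n) (hm : 1 ≤ m) (w : Fin n → ℝ) (hw : ∀ k, 0 < w k)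
    (x : Fin (m + 1) → (Fin n → ℝ))
    (hxH : ∀ i k, x i k = 0 ∨ x i k = w k)
    (hinj : Function.Injective x) :
    (∀ ξ : Fin (m + 1) → ℝ, ∑ i, ξ i = 0 →
        (∑ i, ∑ j, (∑ k, |x i k - x j k|) * ξ i * ξ j ≤ 0 ∧
          ((∑ i, ∑ j, (∑ k, |x i k - x j k|) * ξ i * ξ j) = 0 → ξ = 0))) ↔
      AffineIndependent ℝ x := by
  -- key formula for the quadratic form
  have key : ∀ ξ : Fin (m + 1) → ℝ, ∑ i, ξ i = 0 →
      ∑ i, ∑ j, (∑ k, |x i k - x j k|) * ξ i * ξ j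
        = ∑ k, (-2) * (∑ i, x i k * ξ i)^2 / w k := by
    intro ξ hξ
    have habs : ∀ i j k, |x i k - x j k| = (x i k - x j k)^2 / w k := by
      intro i j k
      rcases hxH i k with h1|h1 <;> rcases hxH j k with h2|h2 <;> rw [h1, h2] <;>
        simp [abs_of_nonneg (hw k).le, sq, mul_div_assoc, div_self (hw k).ne']
    calc ∑ i, ∑ j, (∑ k, |x i k - x j k|) * ξ i * ξ j
        = ∑ i, ∑ j, ∑ k, (x i k - x j k)^2 * ξ i * ξ j / w k := by
          refine Finset.sum_congr rfl fun i _ => Finset.sum_congr rfl fun j _ => ?_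
          rw [Finset.sum_mul, Finset.sum_mul]
          refine Finset.sum_congr rfl fun k _ => ?_
          rw [habs i j k]; ring
      _ = ∑ k, ∑ i, ∑ j, (x i k - x j k)^2 * ξ i * ξ j / w k := by
          rw [show (∑ i, ∑ j, ∑ k, (x i k - x j k)^2 * ξ i * ξ j / w k)
              = ∑ i, ∑ k, ∑ j, (x i k - x j k)^2 * ξ i * ξ j / w k from
            Finset.sum_congr rfl fun i _ => Finset.sum_comm, Finset.sum_comm]
      _ = ∑ k, (-2) * (∑ i, x i k * ξ i)^2 / w k := by
          refine Finset.sum_congr rfl fun k _ => ?_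
          rw [← quad_key _ (fun i => x i k) ξ hξ, Finset.sum_div]
          exact Finset.sum_congr rfl fun i _ => by rw [Finset.sum_div]
  constructor
  · intro hstrict
    rw [affineIndependent_iff_of_fintype]
    intro ξ hξ hvsub
    rw [Finset.univ.weightedVSub_eq_linear_combination hξ] at hvsub
    have hsum : ∑ i, ξ i • x i = 0 := hvsub
    have hck : ∀ k, ∑ i, x i k * ξ i = 0 := by
      intro k
      have := congrFun hsum k
      simpa [Finset.sum_apply, mul_comm] using this
    have h0 : ∑ i, ∑ j, (∑ k, |x i k - x j k|) * ξ i * ξ j = 0 := by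
      rw [key ξ hξ]
      refine Finset.sum_eq_zero fun k _ => ?_
      rw [hck k]; ring
    intro i
    exact congrFun ((hstrict ξ hξ).2 h0) i
  · intro haff ξ hξ
    rw [key ξ hξ]
    have hterm : ∀ k, (-2) * (∑ i, x i k * ξ i)^2 / w k ≤ 0 := by
      intro k
      apply div_nonpos_of_nonpos_of_nonneg _ (hw k).le
      nlinarith [sq_nonneg (∑ i, x i k * ξ i)]
    constructor
    · exact Finset.sum_nonpos fun k _ => hterm k
    · intro h0
      have hck : ∀ k, ∑ i, x i k * ξ i = 0 := by
        intro k
        have := (Finset.sum_eq_zero_iff_of_nonpos (fun k _ => hterm k)).mp h0 k (Finset.mem_univ k)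
        have hw' := (hw k).ne'
        field_simp at this
        have h2 : (∑ i, x i k * ξ i)^2 = 0 := by linarith
        exact pow_eq_zero_iff (by norm_num : (2:ℕ) ≠ 0) |>.mp h2
      have hsum : ∑ i, ξ i • x i = 0 := by
        funext k
        simp only [Finset.sum_apply, Pi.smul_apply, smul_eq_mul, Pi.zero_apply]
        rw [← hck k]
        exact Finset.sum_congr rfl fun i _ => mul_comm _ _
      funext i
      have hvsub : Finset.univ.weightedVSub x ξ = (0 : Fin n → ℝ) := by
        rwa [Finset.univ.weightedVSub_eq_linear_combination hξ]
      exact (affineIndependent_iff_of_fintype (k := ℝ) x).mp haff ξ hξ hvsub i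
end

section
/- Let x_0, …, x_m (m ≥ 1) be distinct points of the weighted Hamming cube H_W. Then the family (x_0,…,x_m) is affinely independent in ℝⁿ if and only if there exists p > 1 such that the metric space {x_0,…,x_m} is of p-negative type. -/
/-!
Each coordinate of a point of the cube takes only the two values `0` and `w k`, and on
`{0, c}` one has `|a - b| = a + b - 2ab/c`. Hence, for weights `ξ` summing to zero, the
quadratic form of the `ℓ¹` distance is `∑ d(x_i, x_j) ξ_i ξ_j = -∑_k (2 / w_k) (∑_i ξ_i x_i k)²`,
and affine independence of the points is exactly strict `1`-negative type.

Strict negative type of a finite kernel is an open condition (the unit sphere of the hyperplane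
`∑ ξ = 0` is compact), and `d ^ p → d` as `p → 1`, so strict `1`-negative type persists to some
`p > 1`.

Conversely, if `N = d ^ p` has negative type, Schoenberg's argument shows that every
`exp (-t N)` is positive semidefinite, and for `α = 1/p ∈ (0, 1)` the kernel `d = N ^ α` is a
positive mixture `∫ (1 - exp (-t N)) t ^ (-1 - α) dt`. On the hyperplane the form of `d` is then
minus the integral of `t ↦ ∑ exp (-t N_ij) ξ_i ξ_j · t ^ (-1 - α)`, which is nonnegative and, since
the points are distinct, tends to `∑ ξ_i² > 0` as `t → ∞`; so `d` has strict negative type.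
-/

open Finset Matrix Filter Topology

variable {ι : Type*} [Fintype ι]

def kernelForm (K : Matrix ι ι ℝ) (ξ : ι → ℝ) : ℝ := ∑ i, ∑ j, K i j * ξ i * ξ j

def IsNegType (K : Matrix ι ι ℝ) : Prop :=
  ∀ ξ : ι → ℝ, ∑ i, ξ i = 0 → kernelForm K ξ ≤ 0

def IsStrictNegType (K : Matrix ι ι ℝ) : Prop :=
  ∀ ξ : ι → ℝ, ∑ i, ξ i = 0 → ξ ≠ 0 → kernelForm K ξ < 0

lemma IsStrictNegType.isNegType {K : Matrix ι ι ℝ} (hK : IsStrictNegType K) : IsNegType K := by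
  intro ξ hξ
  by_cases h0 : ξ = 0
  · simp [kernelForm, h0]
  · exact (hK ξ hξ h0).le

lemma kernelForm_eq_dotProduct (K : Matrix ι ι ℝ) (ξ : ι → ℝ) :
    kernelForm K ξ = ξ ⬝ᵥ (K *ᵥ ξ) := by
  simp only [kernelForm, dotProduct, mulVec, mul_sum]
  exact sum_congr rfl fun i _ => sum_congr rfl fun j _ => by ring

lemma kernelForm_smul (K : Matrix ι ι ℝ) (c : ℝ) (ξ : ι → ℝ) :
    kernelForm K (c • ξ) = c ^ 2 * kernelForm K ξ := by
  simp only [kernelForm_eq_dotProduct, mulVec_smul, smul_dotProduct, dotProduct_smul,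
    smul_eq_mul]
  ring

lemma continuous_kernelForm : Continuous fun p : Matrix ι ι ℝ × (ι → ℝ) => kernelForm p.1 p.2 := by
  unfold kernelForm
  fun_prop

lemma IsStrictNegType.eventually_nhds {K : Matrix ι ι ℝ} (hK : IsStrictNegType K) :
    ∀ᶠ L in 𝓝 K, IsStrictNegType L := by
  set S : Set (ι → ℝ) := Metric.sphere 0 1 ∩ {ξ | ∑ i, ξ i = 0}
  have hS : IsCompact S := (isCompact_sphere 0 1).inter_right
    (isClosed_eq (continuous_finsetSum _ fun i _ => continuous_apply i) continuous_const)
  have hneg : ∀ᶠ L in 𝓝 K, ∀ ξ ∈ S, kernelForm L ξ < 0 := by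
    refine hS.eventually_forall_of_forall_eventually fun ξ hξ => ?_
    have h0 : ξ ≠ 0 := by
      rintro rfl
      simp [S] at hξ
    have := hK ξ hξ.2 h0
    exact continuous_kernelForm.continuousAt.eventually (gt_mem_nhds this)
  filter_upwards [hneg] with L hL ξ hξ h0
  have hnorm : 0 < ‖ξ‖ := norm_pos_iff.mpr h0
  have hmem : ‖ξ‖⁻¹ • ξ ∈ S := by
    refine ⟨?_, ?_⟩
    · simp [norm_smul, hnorm.ne']
    · simp [← mul_sum, hξ]
  have := hL _ hmem
  rw [kernelForm_smul] at this
  exact neg_of_mul_neg_right this (by positivity)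

lemma IsStrictNegType.exists_one_lt_isNegType_rpow {K : Matrix ι ι ℝ} (hK : IsStrictNegType K) :
    ∃ p : ℝ, 1 < p ∧ IsNegType fun i j => K i j ^ p := by
  have hcont : Tendsto (fun p : ℝ => (fun i j => K i j ^ p : Matrix ι ι ℝ)) (𝓝 1) (𝓝 K) :=
    tendsto_pi_nhds.mpr fun i => tendsto_pi_nhds.mpr fun j => by
      simpa using (Real.continuousAt_const_rpow' (a := K i j) one_ne_zero).tendsto
  obtain ⟨p, hstrict, hp⟩ := ((hcont.eventually hK.eventually_nhds).filter_mono
    nhdsWithin_le_nhds |>.and (eventually_mem_nhdsWithin (s := Set.Ioi 1))).exists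
  exact ⟨p, hp, hstrict.isNegType⟩

lemma Matrix.posSemidef_iff_kernelForm_nonneg {K : Matrix ι ι ℝ} :
    K.PosSemidef ↔ K.IsHermitian ∧ ∀ ξ, 0 ≤ kernelForm K ξ := by
  simp [posSemidef_iff_dotProduct_mulVec, kernelForm_eq_dotProduct]

lemma Matrix.PosSemidef.map_pow {K : Matrix ι ι ℝ} (hK : K.PosSemidef) (n : ℕ) :
    (K.map (· ^ n)).PosSemidef := by
  induction n with
  | zero =>
    convert posSemidef_vecMulVec_self_star (1 : ι → ℝ)
    ext i j
    simp [vecMulVec]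
  | succ n ih =>
    have : K.map (· ^ (n + 1)) = K.map (· ^ n) ⊙ K := by
      ext i j
      simp [pow_succ]
    rw [this]
    exact ih.hadamard hK

lemma Matrix.PosSemidef.map_exp {K : Matrix ι ι ℝ} (hK : K.PosSemidef) :
    (K.map Real.exp).PosSemidef := by
  refine posSemidef_iff_kernelForm_nonneg.mpr ⟨hK.isHermitian.map _ fun _ => rfl, fun ξ => ?_⟩
  have hsum : HasSum (fun n : ℕ => kernelForm (K.map (· ^ n)) ξ / n.factorial)
      (kernelForm (K.map Real.exp) ξ) := by
    simp only [kernelForm, sum_div]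
    refine hasSum_sum fun i _ => hasSum_sum fun j _ => ?_
    have := (NormedSpace.expSeries_div_hasSum_exp (K i j)).mul_right (ξ i * ξ j)
    simpa [Real.exp_eq_exp_ℝ, mul_assoc, div_mul_eq_mul_div] using this
  exact hsum.nonneg fun n =>
    div_nonneg ((posSemidef_iff_kernelForm_nonneg.mp (hK.map_pow n)).2 ξ) (by positivity)

lemma IsNegType.posSemidef_basepoint {N : Matrix ι ι ℝ} (hN : IsNegType N) (hsymm : N.IsSymm)
    (hdiag : ∀ i, N i i = 0) (o : ι) :
    (Matrix.of fun i j => N i o + N j o - N i j).PosSemidef := by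
  classical
  refine posSemidef_iff_kernelForm_nonneg.mpr ⟨?_, fun η => ?_⟩
  · exact IsHermitian.ext fun i j => by simp only [of_apply, hsymm.apply i j, star_trivial]; ring
  · -- the form of this kernel at `η` is minus the form of `N` at `η - (∑ η) • e_o`
    set s := ∑ i, η i
    set A := ∑ i, N i o * η i
    have h := hN (η - s • Pi.single o 1) (by simp [s, Pi.single_apply])
    have e1 : kernelForm (Matrix.of fun i j => N i o + N j o - N i j) η
        = 2 * s * A - kernelForm N η := by
      have hswap : ∀ i j, N j o * η i * η j = η i * (N j o * η j) := fun i j => by ring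
      simp only [kernelForm, of_apply, add_mul, sub_mul, sum_add_distrib, sum_sub_distrib, hswap,
        ← mul_sum, ← sum_mul]
      ring
    have e2 : kernelForm N (η - s • Pi.single o 1) = kernelForm N η - 2 * s * A := by
      have hA : (N *ᵥ η) o = A := by
        simp only [mulVec, dotProduct, A, ← hsymm.apply o]
      have hA' : η ⬝ᵥ N.col o = A := by
        simp only [dotProduct, col_apply, A, mul_comm]
      simp only [kernelForm_eq_dotProduct, mulVec_sub, mulVec_smul, sub_dotProduct,
        dotProduct_sub, smul_dotProduct, dotProduct_smul, mulVec_single_one,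
        single_one_dotProduct, hA, hA', col_apply, hdiag, smul_eq_mul]
      ring
    linarith

lemma IsNegType.posSemidef_map_exp_neg_mul [Nonempty ι] {N : Matrix ι ι ℝ} (hN : IsNegType N)
    (hsymm : N.IsSymm) (hdiag : ∀ i, N i i = 0) {t : ℝ} (ht : 0 ≤ t) :
    (N.map fun a => Real.exp (-(t * a))).PosSemidef := by
  obtain ⟨o⟩ := ‹Nonempty ι›
  set v : ι → ℝ := fun i => Real.exp (-(t * N i o))
  have hfactor : N.map (fun a => Real.exp (-(t * a)))
      = vecMulVec v (star v) ⊙ (t • Matrix.of fun i j => N i o + N j o - N i j).map Real.exp := by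
    ext i j
    simp only [map_apply, hadamard_apply, vecMulVec_apply, star_trivial, Matrix.smul_apply,
      of_apply, smul_eq_mul, v, ← Real.exp_add]
    congr 1
    ring
  rw [hfactor]
  exact (posSemidef_vecMulVec_self_star v).hadamard
    ((hN.posSemidef_basepoint hsymm hdiag o).smul ht).map_exp

lemma tendsto_kernelForm_map_exp_neg_mul {N : Matrix ι ι ℝ} (hdiag : ∀ i, N i i = 0)
    (hpos : ∀ i j, i ≠ j → 0 < N i j) (ξ : ι → ℝ) :
    Tendsto (fun t => kernelForm (N.map fun a => Real.exp (-(t * a))) ξ) atTop (𝓝 (ξ ⬝ᵥ ξ)) := by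
  classical
  have hmat : Tendsto (fun t : ℝ => N.map fun a => Real.exp (-(t * a))) atTop (𝓝 1) := by
    refine tendsto_pi_nhds.mpr fun i => tendsto_pi_nhds.mpr fun j => ?_
    rcases eq_or_ne i j with rfl | hij
    · simp [hdiag]
    · simp only [map_apply, one_apply_ne hij]
      exact Real.tendsto_exp_neg_atTop_nhds_zero.comp (tendsto_id.atTop_mul_const (hpos i j hij))
  have hcont : Continuous fun K : Matrix ι ι ℝ => kernelForm K ξ := by
    unfold kernelForm
    fun_prop
  simpa [Function.comp_def, kernelForm_eq_dotProduct] using (hcont.tendsto 1).comp hmat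

lemma kernelForm_one_sub_exp_neg_mul_mul {N : Matrix ι ι ℝ} {ξ : ι → ℝ} (hξ : ∑ i, ξ i = 0)
    (t s : ℝ) : kernelForm (fun i j => (1 - Real.exp (-(t * N i j))) * s) ξ
      = -(kernelForm (N.map fun a => Real.exp (-(t * a))) ξ * s) := by
  have hsplit : ∀ i j, (1 - Real.exp (-(t * N i j))) * s * ξ i * ξ j
      = s * ξ i * ξ j - Real.exp (-(t * N i j)) * ξ i * ξ j * s := fun i j => by ring
  simp only [kernelForm, hsplit, map_apply, sum_sub_distrib, ← mul_sum, ← sum_mul, hξ]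
  ring

section

open MeasureTheory Set

lemma setIntegral_Ioi_pos_of_eventually_pos {f : ℝ → ℝ} {a : ℝ} (hf : IntegrableOn f (Ioi a))
    (hnonneg : ∀ t ∈ Ioi a, 0 ≤ f t) (hpos : ∀ᶠ t in atTop, 0 < f t) :
    0 < ∫ t in Ioi a, f t := by
  rw [setIntegral_pos_iff_support_of_nonneg_ae ((ae_restrict_iff' measurableSet_Ioi).mpr
    (ae_of_all _ hnonneg)) hf]
  obtain ⟨T, hT⟩ := hpos.exists_forall_of_atTop
  have hsub : Ioi (max a T) ⊆ Function.support f ∩ Ioi a := fun t ht =>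
    ⟨(hT t (le_of_max_le_right ht.le)).ne', lt_of_le_of_lt (le_max_left a T) ht⟩
  exact (measure_mono hsub).trans_lt' (by simp)

variable {α : ℝ}

lemma integrableOn_one_sub_exp_neg_mul_rpow (hα0 : 0 < α) (hα1 : α < 1) {c : ℝ} (hc : 0 ≤ c) :
    IntegrableOn (fun t => (1 - Real.exp (-(t * c))) * t ^ (-1 - α)) (Ioi 0) := by
  have hmeas : ∀ s ⊆ Ioi (0 : ℝ), MeasurableSet s → AEStronglyMeasurable
      (fun t => (1 - Real.exp (-(t * c))) * t ^ (-1 - α)) (volume.restrict s) :=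
    fun s hs hms => ContinuousOn.aestronglyMeasurable (fun t ht =>
      ((by fun_prop : Continuous fun t => 1 - Real.exp (-(t * c))).continuousAt.mul
        (Real.continuousAt_rpow_const t _ (Or.inl (hs ht).ne'))).continuousWithinAt) hms
  have hbound : ∀ t, 0 < t →
      0 ≤ 1 - Real.exp (-(t * c)) ∧ 1 - Real.exp (-(t * c)) ≤ min (t * c) 1 := by
    intro t ht
    have h1 := Real.add_one_le_exp (-(t * c))
    have h2 := Real.exp_pos (-(t * c))
    have h3 : Real.exp (-(t * c)) ≤ 1 := Real.exp_le_one_iff.mpr (by nlinarith)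
    exact ⟨by linarith, le_min (by linarith) (by linarith)⟩
  have hnear : IntegrableOn (fun t => (1 - Real.exp (-(t * c))) * t ^ (-1 - α)) (Ioc 0 1) := by
    refine (((intervalIntegrable_iff_integrableOn_Ioc_of_le zero_le_one).mp
      (intervalIntegral.intervalIntegrable_rpow' (r := -α) (by linarith))).const_mul c).mono'
      (hmeas _ Ioc_subset_Ioi_self measurableSet_Ioc) ?_
    filter_upwards [ae_restrict_mem measurableSet_Ioc] with t ht
    obtain ⟨h0, h1⟩ := hbound t ht.1
    rw [Real.norm_eq_abs, abs_of_nonneg (mul_nonneg h0 (Real.rpow_nonneg ht.1.le _)),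
      show -α = 1 + (-1 - α) by ring, Real.rpow_add ht.1, Real.rpow_one, ← mul_assoc, mul_comm c t]
    exact mul_le_mul_of_nonneg_right (h1.trans (min_le_left _ _))
      (Real.rpow_nonneg ht.1.le _)
  have hfar : IntegrableOn (fun t => (1 - Real.exp (-(t * c))) * t ^ (-1 - α)) (Ioi 1) := by
    refine (integrableOn_Ioi_rpow_of_lt (a := -1 - α) (by linarith) zero_lt_one).mono'
      (hmeas _ (Ioi_subset_Ioi zero_le_one) measurableSet_Ioi) ?_
    filter_upwards [ae_restrict_mem measurableSet_Ioi] with t ht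
    obtain ⟨h0, h1⟩ := hbound t (zero_lt_one.trans ht)
    have hpow : 0 ≤ t ^ (-1 - α) := Real.rpow_nonneg (zero_lt_one.trans ht).le _
    rw [Real.norm_eq_abs, abs_of_nonneg (mul_nonneg h0 hpow)]
    exact mul_le_of_le_one_left hpow (h1.trans (min_le_right _ _))
  simpa [Ioc_union_Ioi_eq_Ioi zero_le_one] using hnear.union hfar

lemma integral_one_sub_exp_neg_mul_rpow (hα0 : 0 < α) {c : ℝ} (hc : 0 ≤ c) :
    ∫ t in Ioi 0, (1 - Real.exp (-(t * c))) * t ^ (-1 - α)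
      = c ^ α * ∫ t in Ioi 0, (1 - Real.exp (-t)) * t ^ (-1 - α) := by
  rcases hc.eq_or_lt with rfl | hc
  · simp [Real.zero_rpow hα0.ne']
  set g : ℝ → ℝ := fun s => (1 - Real.exp (-s)) * s ^ (-1 - α)
  have hscale : ∀ t ∈ Ioi (0 : ℝ),
      (1 - Real.exp (-(t * c))) * t ^ (-1 - α) = c ^ (1 + α) * g (c * t) := by
    intro t ht
    have hc1 : c ^ (1 + α) * c ^ (-1 - α) = 1 := by
      rw [← Real.rpow_add hc, show 1 + α + (-1 - α) = 0 by ring, Real.rpow_zero]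
    simp only [g, Real.mul_rpow hc.le (le_of_lt ht), mul_comm t c]
    linear_combination (-(1 - Real.exp (-(c * t))) * t ^ (-1 - α)) * hc1
  rw [setIntegral_congr_fun measurableSet_Ioi hscale, integral_const_mul,
    integral_comp_mul_left_Ioi g 0 hc, mul_zero, smul_eq_mul, ← mul_assoc,
    ← Real.rpow_neg_one c, ← Real.rpow_add hc, show 1 + α + -1 = α by ring]

lemma integral_one_sub_exp_neg_rpow_pos (hα0 : 0 < α) (hα1 : α < 1) :
    0 < ∫ t in Ioi 0, (1 - Real.exp (-t)) * t ^ (-1 - α) := by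
  have hpos : ∀ t : ℝ, 0 < t → 0 < (1 - Real.exp (-t)) * t ^ (-1 - α) := fun t ht =>
    mul_pos (sub_pos.mpr (Real.exp_lt_one_iff.mpr (neg_lt_zero.mpr ht))) (Real.rpow_pos_of_pos ht _)
  refine setIntegral_Ioi_pos_of_eventually_pos ?_ (fun t ht => (hpos t ht).le)
    ((eventually_gt_atTop 0).mono hpos)
  simpa using integrableOn_one_sub_exp_neg_mul_rpow hα0 hα1 zero_le_one

lemma integrableOn_kernelForm_one_sub_exp_neg_mul_rpow {N : Matrix ι ι ℝ}
    (hN0 : ∀ i j, 0 ≤ N i j) (hα0 : 0 < α) (hα1 : α < 1) (ξ : ι → ℝ) :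
    IntegrableOn (fun t => kernelForm
      (fun i j => (1 - Real.exp (-(t * N i j))) * t ^ (-1 - α)) ξ) (Ioi 0) :=
  integrable_finsetSum _ fun i _ => integrable_finsetSum _ fun j _ =>
    ((integrableOn_one_sub_exp_neg_mul_rpow hα0 hα1 (hN0 i j)).mul_const _).mul_const _

lemma integral_kernelForm_one_sub_exp_neg_mul_rpow {N : Matrix ι ι ℝ}
    (hN0 : ∀ i j, 0 ≤ N i j) (hα0 : 0 < α) (hα1 : α < 1) (ξ : ι → ℝ) :
    ∫ t in Ioi 0, kernelForm (fun i j => (1 - Real.exp (-(t * N i j))) * t ^ (-1 - α)) ξ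
      = kernelForm (fun i j => N i j ^ α) ξ
          * ∫ t in Ioi 0, (1 - Real.exp (-t)) * t ^ (-1 - α) := by
  have hint := fun i j => integrableOn_one_sub_exp_neg_mul_rpow hα0 hα1 (hN0 i j)
  simp only [kernelForm]
  rw [integral_finsetSum _ fun i _ => integrable_finsetSum _ fun j _ =>
    ((hint i j).mul_const _).mul_const _, sum_mul]
  refine sum_congr rfl fun i _ => ?_
  rw [integral_finsetSum _ fun j _ => ((hint i j).mul_const _).mul_const _, sum_mul]
  refine sum_congr rfl fun j _ => ?_
  rw [integral_mul_const, integral_mul_const, integral_one_sub_exp_neg_mul_rpow hα0 (hN0 i j)]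
  ring

lemma IsNegType.isStrictNegType_rpow {N : Matrix ι ι ℝ} (hN : IsNegType N) (hsymm : N.IsSymm)
    (hdiag : ∀ i, N i i = 0) (hpos : ∀ i j, i ≠ j → 0 < N i j) (hα0 : 0 < α) (hα1 : α < 1) :
    IsStrictNegType fun i j => N i j ^ α := by
  intro ξ hξ hξ0
  obtain ⟨o, -⟩ := Function.ne_iff.mp hξ0
  have : Nonempty ι := ⟨o⟩
  have hN0 : ∀ i j, 0 ≤ N i j := fun i j => by
    rcases eq_or_ne i j with rfl | hij
    exacts [(hdiag i).ge, (hpos i j hij).le]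
  have hrepr := integral_kernelForm_one_sub_exp_neg_mul_rpow hN0 hα0 hα1 ξ
  simp only [kernelForm_one_sub_exp_neg_mul_mul hξ, integral_neg] at hrepr
  have hint : 0 < ∫ t in Ioi 0,
      kernelForm (N.map fun a => Real.exp (-(t * a))) ξ * t ^ (-1 - α) := by
    refine setIntegral_Ioi_pos_of_eventually_pos ?_ (fun t ht => ?_) ?_
    · simpa only [kernelForm_one_sub_exp_neg_mul_mul hξ, Pi.neg_def, neg_neg] using
        (integrableOn_kernelForm_one_sub_exp_neg_mul_rpow hN0 hα0 hα1 ξ).neg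
    · exact mul_nonneg ((posSemidef_iff_kernelForm_nonneg.mp
        (hN.posSemidef_map_exp_neg_mul hsymm hdiag (le_of_lt ht))).2 ξ)
        (Real.rpow_nonneg (le_of_lt ht) _)
    · have hlim : 0 < ξ ⬝ᵥ ξ := by simpa using dotProduct_star_self_pos_iff.mpr hξ0
      filter_upwards [(tendsto_kernelForm_map_exp_neg_mul hdiag hpos ξ).eventually
        (lt_mem_nhds hlim), eventually_gt_atTop 0] with t hGt ht
      exact mul_pos hGt (Real.rpow_pos_of_pos ht _)
  exact neg_of_mul_neg_left (by linarith) (integral_one_sub_exp_neg_rpow_pos hα0 hα1).le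

end

lemma affineIndependent_iff_forall_sum_smul_eq_zero {V : Type*} [AddCommGroup V] [Module ℝ V]
    {p : ι → V} : AffineIndependent ℝ p ↔
      ∀ ξ : ι → ℝ, ∑ i, ξ i = 0 → ∑ i, ξ i • p i = 0 → ξ = 0 := by
  simp only [affineIndependent_iff_of_fintype, funext_iff]
  refine forall₂_congr fun ξ hξ => ?_
  rw [univ.weightedVSub_eq_linear_combination hξ]
  rfl

lemma kernelForm_abs_sub_of_mem_pair {c : ℝ} (hc : 0 < c) {a : ι → ℝ}
    (ha : ∀ i, a i = 0 ∨ a i = c) {ξ : ι → ℝ} (hξ : ∑ i, ξ i = 0) :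
    kernelForm (fun i j => |a i - a j|) ξ = -(2 / c * (∑ i, ξ i * a i) ^ 2) := by
  have habs : ∀ i j, |a i - a j| = a i + a j - 2 / c * (a i * a j) := by
    intro i j
    rcases ha i with hi | hi <;> rcases ha j with hj | hj <;>
      simp only [hi, hj, sub_self, sub_zero, zero_sub, abs_neg, abs_zero, abs_of_pos hc] <;>
      field_simp <;> ring
  calc kernelForm (fun i j => |a i - a j|) ξ
      = ∑ i, ∑ j, ((ξ i * a i) * ξ j + ξ i * (ξ j * a j)
          - 2 / c * ((ξ i * a i) * (ξ j * a j))) := by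
        simp only [kernelForm, habs]
        exact sum_congr rfl fun i _ => sum_congr rfl fun j _ => by ring
    _ = -(2 / c * (∑ i, ξ i * a i) ^ 2) := by
        simp only [sum_add_distrib, sum_sub_distrib, ← mul_sum, ← sum_mul, hξ]
        ring

lemma kernelForm_l1Dist_of_mem_cube {n : ℕ} {w : Fin n → ℝ} (hw : ∀ k, 0 < w k)
    {x : ι → Fin n → ℝ} (hx : ∀ i k, x i k = 0 ∨ x i k = w k) {ξ : ι → ℝ} (hξ : ∑ i, ξ i = 0) :
    kernelForm (fun i j => ∑ k, |x i k - x j k|) ξ = -∑ k, 2 / w k * (∑ i, ξ i * x i k) ^ 2 := by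
  have hsum : kernelForm (fun i j => ∑ k, |x i k - x j k|) ξ
      = ∑ k, kernelForm (fun i j => |x i k - x j k|) ξ := by
    simp only [kernelForm, sum_mul]
    exact (sum_congr rfl fun i _ => sum_comm).trans sum_comm
  rw [hsum, ← sum_neg_distrib]
  exact sum_congr rfl fun k _ => kernelForm_abs_sub_of_mem_pair (hw k) (fun i => hx i k) hξ

lemma affineIndependent_iff_isStrictNegType_of_mem_cube {n : ℕ} {w : Fin n → ℝ}
    (hw : ∀ k, 0 < w k) {x : ι → Fin n → ℝ} (hx : ∀ i k, x i k = 0 ∨ x i k = w k) :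
    AffineIndependent ℝ x ↔ IsStrictNegType (fun i j => ∑ k, |x i k - x j k|) := by
  have key : ∀ ξ : ι → ℝ, ∑ i, ξ i = 0 →
      (kernelForm (fun i j => ∑ k, |x i k - x j k|) ξ < 0 ↔ ∑ i, ξ i • x i ≠ 0) := by
    intro ξ hξ
    rw [kernelForm_l1Dist_of_mem_cube hw hx hξ, neg_lt_zero,
      sum_pos_iff_of_nonneg fun k _ => by have := hw k; positivity]
    simp only [mem_univ, true_and, ne_eq, funext_iff, Finset.sum_apply, Pi.smul_apply,
      smul_eq_mul, Pi.zero_apply, not_forall]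
    exact exists_congr fun k => by
      rw [mul_pos_iff_of_pos_left (by have := hw k; positivity), sq_pos_iff]
  rw [affineIndependent_iff_forall_sum_smul_eq_zero]
  refine forall₂_congr fun ξ hξ => ?_
  rw [key ξ hξ]
  tauto

theorem stmt6_general (n m : ℕ) (w : Fin n → ℝ) (hw : ∀ k, 0 < w k)
    (x : Fin (m + 1) → (Fin n → ℝ))
    (hxH : ∀ i k, x i k = 0 ∨ x i k = w k)
    (hinj : Function.Injective x) :
    AffineIndependent ℝ x ↔
      (∃ p : ℝ, 1 < p ∧
        ∀ ξ : Fin (m + 1) → ℝ, ∑ i, ξ i = 0 →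
          ∑ i, ∑ j, (∑ k, |x i k - x j k|) ^ p * ξ i * ξ j ≤ 0) := by
  have hd0 : ∀ i j, 0 ≤ ∑ k, |x i k - x j k| := fun i j => sum_nonneg fun k _ => abs_nonneg _
  have hdpos : ∀ i j, i ≠ j → 0 < ∑ k, |x i k - x j k| := fun i j hij => by
    obtain ⟨k, hk⟩ := Function.ne_iff.mp (hinj.ne hij)
    exact sum_pos' (fun k _ => abs_nonneg _) ⟨k, mem_univ k, abs_pos.mpr (sub_ne_zero.mpr hk)⟩
  rw [affineIndependent_iff_isStrictNegType_of_mem_cube hw hxH]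
  refine ⟨IsStrictNegType.exists_one_lt_isNegType_rpow, fun ⟨p, hp, hneg⟩ => ?_⟩
  have hp0 : 0 < p := zero_lt_one.trans hp
  have := IsNegType.isStrictNegType_rpow hneg
    (IsSymm.ext fun i j => by simp only [abs_sub_comm])
    (fun i => by simp [Real.zero_rpow hp0.ne'])
    (fun i j hij => Real.rpow_pos_of_pos (hdpos i j hij) p)
    (inv_pos.mpr hp0) (inv_lt_one_of_one_lt₀ hp)
  simpa only [Real.rpow_rpow_inv (hd0 _ _) hp0.ne'] using this

/-- A nontrivial subset of a weighted Hamming cube is affinely independent iff it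
has `p`-negative type for some `p > 1`. -/
theorem stmt6 (n m : ℕ) (hn : 1 ≤ n) (hm : 1 ≤ m) (w : Fin n → ℝ) (hw : ∀ k, 0 < w k)
    (x : Fin (m + 1) → (Fin n → ℝ))
    (hxH : ∀ i k, x i k = 0 ∨ x i k = w k)
    (hinj : Function.Injective x) :
    AffineIndependent ℝ x ↔
      (∃ p : ℝ, 1 < p ∧
        ∀ ξ : Fin (m + 1) → ℝ, ∑ i, ξ i = 0 →
          ∑ i, ∑ j, (∑ k, |x i k - x j k|) ^ p * ξ i * ξ j ≤ 0) :=
  stmt6_general n m w hw x hxH hinj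
end

section
/- Let x_0, …, x_m be distinct points of the weighted Hamming cube H_W. Let ι : ℝⁿ → ℝⁿ be the linear map (ι x) k = (x k)/√(w k), let h ∈ ℝⁿ be the point h k = √(w k)/2, and let Z be the affine span over ℝ of {ι(x_0),…,ι(x_m)} inside ℝⁿ with the Euclidean (ℓ²) metric. Define M = sup { ∑_{i,j} d(x_i,x_j) ξ_i ξ_j | ξ ∈ ℝ^{m+1}, ∑_i ξ_i = 1 }, where d is the ℓ¹ metric. Then M = (1/2)·∑_k w k − 2·(dist₂(h, Z))², where dist₂(h,Z) is the Euclidean distance from h to Z. -/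
open scoped InnerProductSpace

/-- Formula for the `M`-constant of a subset of a weighted Hamming cube in terms of
the Euclidean distance from the centre of the cube to the affine span of the image
of the set under the natural `S`-embedding. -/
theorem stmt8 (n m : ℕ) (hn : 1 ≤ n) (w : Fin n → ℝ) (hw : ∀ k, 0 < w k)
    (x : Fin (m + 1) → (Fin n → ℝ))
    (hxH : ∀ i k, x i k = 0 ∨ x i k = w k)
    (hinj : Function.Injective x) :
    sSup { s : ℝ | ∃ ξ : Fin (m + 1) → ℝ, ∑ i, ξ i = 1 ∧
        s = ∑ i, ∑ j, (∑ k, |x i k - x j k|) * ξ i * ξ j } =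
      (1 / 2) * (∑ k, w k) -
        2 * (Metric.infDist
          ((EuclideanSpace.equiv (Fin n) ℝ).symm (fun k => Real.sqrt (w k) / 2))
          ((affineSpan ℝ (Set.range fun i =>
              (EuclideanSpace.equiv (Fin n) ℝ).symm
                (fun k => x i k / Real.sqrt (w k)))) :
            Set (EuclideanSpace ℝ (Fin n)))) ^ 2 := by
  classical
  have hw' : ∀ k, Real.sqrt (w k) ≠ 0 := fun k =>
    ne_of_gt (Real.sqrt_pos.2 (hw k))
  have hsq : ∀ k, Real.sqrt (w k) ^ 2 = w k := fun k => Real.sq_sqrt (hw k).le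
  set y : Fin (m + 1) → EuclideanSpace ℝ (Fin n) :=
    fun i => (EuclideanSpace.equiv (Fin n) ℝ).symm (fun k => x i k / Real.sqrt (w k)) with hy
  set h : EuclideanSpace ℝ (Fin n) :=
    (EuclideanSpace.equiv (Fin n) ℝ).symm (fun k => Real.sqrt (w k) / 2) with hh
  have normsq : ∀ v : EuclideanSpace ℝ (Fin n), ‖v‖ ^ 2 = ∑ k, (v k) ^ 2 := by
    intro v
    rw [EuclideanSpace.norm_eq,
      Real.sq_sqrt (Finset.sum_nonneg fun k _ => sq_nonneg _)]
    simp [sq_abs]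
  have lemA : ∀ i j, (∑ k, |x i k - x j k|) = ‖y i - y j‖ ^ 2 := by
    intro i j
    rw [normsq]
    refine Finset.sum_congr rfl fun k _ => ?_
    have e1 : (y i - y j) k = (x i k - x j k) / Real.sqrt (w k) := by
      show x i k / Real.sqrt (w k) - x j k / Real.sqrt (w k) = _
      ring
    rw [e1, div_pow, hsq k]
    rcases hxH i k with h1 | h1 <;> rcases hxH j k with h2 | h2 <;> rw [h1, h2]
    · simp
    · rw [zero_sub, abs_neg, abs_of_nonneg (hw k).le, neg_sq,
        eq_div_iff (hw k).ne']
      ring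
    · rw [sub_zero, abs_of_nonneg (hw k).le, eq_div_iff (hw k).ne']
      ring
    · simp
  have lemB : ∀ i, ‖y i - h‖ ^ 2 = (∑ k, w k) / 4 := by
    intro i
    rw [normsq, Finset.sum_div]
    refine Finset.sum_congr rfl fun k _ => ?_
    have e1 : (y i - h) k = x i k / Real.sqrt (w k) - Real.sqrt (w k) / 2 := rfl
    rw [e1]
    rcases hxH i k with h1 | h1
    · rw [h1]
      simp only [zero_div, zero_sub, neg_sq]
      rw [div_pow, hsq k]
      norm_num
    · rw [h1, Real.div_sqrt]
      linear_combination (hsq k) / 4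
  have key : ∀ ξ : Fin (m + 1) → ℝ, (∑ i, ξ i = 1) →
      (∑ i, ∑ j, (∑ k, |x i k - x j k|) * ξ i * ξ j)
        = (1 / 2) * (∑ k, w k) - 2 * ‖(∑ i, ξ i • y i) - h‖ ^ 2 := by
    intro ξ hξ
    set a : Fin (m + 1) → EuclideanSpace ℝ (Fin n) := fun i => y i - h with ha
    have hsum : (∑ i, ξ i • a i) = (∑ i, ξ i • y i) - h := by
      simp only [ha, smul_sub]
      rw [Finset.sum_sub_distrib, ← Finset.sum_smul, hξ, one_smul]
    have hB : ∀ i, ‖a i‖ ^ 2 = (∑ k, w k) / 4 := fun i => lemB i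
    have hab : ∀ i j, (∑ k, |x i k - x j k|) = ‖a i - a j‖ ^ 2 := by
      intro i j
      rw [lemA i j]
      congr 1
      simp only [ha]
      abel
    have hinner : ‖(∑ i, ξ i • a i)‖ ^ 2 = ∑ i, ∑ j, ξ i * ξ j * ⟪a i, a j⟫_ℝ := by
      rw [← real_inner_self_eq_norm_sq, sum_inner]
      refine Finset.sum_congr rfl fun i _ => ?_
      rw [real_inner_smul_left, inner_sum, Finset.mul_sum]
      refine Finset.sum_congr rfl fun j _ => ?_
      rw [real_inner_smul_right]
      ring
    set R : ℝ := (∑ k, w k) / 4 with hR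
    calc ∑ i, ∑ j, (∑ k, |x i k - x j k|) * ξ i * ξ j
        = ∑ i, ∑ j, (2 * R * ξ i * ξ j - 2 * (ξ i * ξ j * ⟪a i, a j⟫_ℝ)) := by
          refine Finset.sum_congr rfl fun i _ => Finset.sum_congr rfl fun j _ => ?_
          rw [hab, norm_sub_sq_real, hB i, hB j]
          ring
      _ = 2 * R * ((∑ i, ξ i) * (∑ j, ξ j))
            - 2 * ∑ i, ∑ j, ξ i * ξ j * ⟪a i, a j⟫_ℝ := by
          rw [Finset.sum_mul_sum]
          rw [Finset.mul_sum, Finset.mul_sum, ← Finset.sum_sub_distrib]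
          refine Finset.sum_congr rfl fun i _ => ?_
          rw [Finset.mul_sum, Finset.mul_sum, ← Finset.sum_sub_distrib]
          refine Finset.sum_congr rfl fun j _ => ?_
          ring
      _ = (1 / 2) * (∑ k, w k) - 2 * ‖(∑ i, ξ i • y i) - h‖ ^ 2 := by
          rw [hξ, ← hsum, ← hinner, hR]
          ring
  -- membership lemmas
  have mem_of : ∀ ξ : Fin (m + 1) → ℝ, (∑ i, ξ i = 1) →
      (∑ i, ξ i • y i) ∈ (affineSpan ℝ (Set.range y) : Set (EuclideanSpace ℝ (Fin n))) := by
    intro ξ hξ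
    have := affineCombination_mem_affineSpan (s := Finset.univ) hξ y
    rwa [Finset.affineCombination_eq_linear_combination _ _ _ hξ] at this
  have of_mem : ∀ z : EuclideanSpace ℝ (Fin n),
      z ∈ (affineSpan ℝ (Set.range y) : Set (EuclideanSpace ℝ (Fin n))) →
      ∃ ξ : Fin (m + 1) → ℝ, (∑ i, ξ i = 1) ∧ z = ∑ i, ξ i • y i := by
    intro z hz
    obtain ⟨ξ, hξ, hz'⟩ := eq_affineCombination_of_mem_affineSpan_of_fintype hz
    rw [Finset.affineCombination_eq_linear_combination _ _ _ hξ] at hz'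
    exact ⟨ξ, hξ, hz'⟩
  set Z : Set (EuclideanSpace ℝ (Fin n)) :=
    (affineSpan ℝ (Set.range y) : Set (EuclideanSpace ℝ (Fin n))) with hZ
  set D : ℝ := Metric.infDist h Z with hD
  have hD0 : (0 : ℝ) ≤ D := Metric.infDist_nonneg
  have hub : ∀ s ∈ { s : ℝ | ∃ ξ : Fin (m + 1) → ℝ, ∑ i, ξ i = 1 ∧
      s = ∑ i, ∑ j, (∑ k, |x i k - x j k|) * ξ i * ξ j },
      s ≤ (1 / 2) * (∑ k, w k) - 2 * D ^ 2 := by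
    rintro s ⟨ξ, hξ, rfl⟩
    rw [key ξ hξ]
    have hmem := mem_of ξ hξ
    have hle : D ≤ dist h (∑ i, ξ i • y i) := Metric.infDist_le_dist_of_mem hmem
    have hdd : dist h (∑ i, ξ i • y i) = ‖(∑ i, ξ i • y i) - h‖ := by
      rw [dist_eq_norm, norm_sub_rev]
    rw [hdd] at hle
    nlinarith [norm_nonneg ((∑ i, ξ i • y i) - h)]
  have hne : { s : ℝ | ∃ ξ : Fin (m + 1) → ℝ, ∑ i, ξ i = 1 ∧
      s = ∑ i, ∑ j, (∑ k, |x i k - x j k|) * ξ i * ξ j }.Nonempty := by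
    refine ⟨_, fun i => if i = 0 then 1 else 0, by simp, rfl⟩
  have hZne : Z.Nonempty := ⟨y 0, subset_affineSpan ℝ _ ⟨0, rfl⟩⟩
  have hZcl : IsClosed Z := (affineSpan ℝ (Set.range y)).closed_of_finiteDimensional
  obtain ⟨z, hzZ, hzd⟩ := hZcl.exists_infDist_eq_dist hZne h
  apply le_antisymm
  · exact csSup_le hne hub
  · obtain ⟨ξ, hξ, hz'⟩ := of_mem z hzZ
    have heq : (1 / 2) * (∑ k, w k) - 2 * D ^ 2
        = ∑ i, ∑ j, (∑ k, |x i k - x j k|) * ξ i * ξ j := by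
      rw [key ξ hξ, ← hz']
      have : dist h z = ‖z - h‖ := by rw [dist_eq_norm, norm_sub_rev]
      rw [hD, hzd, this]
    rw [heq]
    exact le_csSup ⟨_, hub⟩ ⟨ξ, hξ, rfl⟩
end

section
/- Let x_0 = 0, x_1, …, x_n be distinct points of the weighted Hamming cube H_W ⊆ ℝⁿ (so there are n+1 points in ℝⁿ), and let D be their distance matrix. Let B̂ be the n×n matrix whose (i,k) entry is (x_i k)/(w k) (which lies in {0,1}). Then the cofactor sum of D, cof(D) = ∑_{i,j} (−1)^{i+j} det(D with row i and column j deleted) — equivalently, the sum of all entries of the adjugate of D, since D is symmetric — equals (−1)^n · 2^n · (∏_k w k) · (det B̂)². -/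
open Matrix Finset

private def cofsum {m : ℕ} (A : Matrix (Fin (m+1)) (Fin (m+1)) ℝ) : ℝ :=
  ∑ i : Fin (m+1), ∑ j : Fin (m+1), (-1:ℝ)^((i:ℕ)+(j:ℕ)) *
    (A.submatrix i.succAbove j.succAbove).det

private def border {m : ℕ} (A : Matrix (Fin (m+1)) (Fin (m+1)) ℝ) :
    Matrix (Fin (m+2)) (Fin (m+2)) ℝ :=
  Matrix.of (Fin.cons (Fin.cons 0 (fun _ => 1)) (fun i => Fin.cons 1 (A i)))

private theorem det_border {m : ℕ} (A : Matrix (Fin (m+1)) (Fin (m+1)) ℝ) :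
    (border A).det = - cofsum A := by
  rw [Matrix.det_succ_row_zero, Fin.sum_univ_succ]
  have h0 : (border A) 0 0 = 0 := rfl
  rw [h0]
  simp only [mul_zero, zero_mul, zero_add]
  have key : ∀ k : Fin (m+1),
      ((border A).submatrix Fin.succ (Fin.succ k).succAbove).det
        = ∑ i : Fin (m+1), (-1:ℝ)^(i:ℕ) * (A.submatrix i.succAbove k.succAbove).det := by
    intro k
    rw [Matrix.det_succ_column_zero]
    refine Finset.sum_congr rfl fun i _ => ?_
    have e1 : ((border A).submatrix Fin.succ (Fin.succ k).succAbove) i 0 = 1 := by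
      simp [border, Matrix.submatrix_apply, Fin.succ_succAbove_zero]
    have e2 : (((border A).submatrix Fin.succ (Fin.succ k).succAbove).submatrix
        i.succAbove Fin.succ) = A.submatrix i.succAbove k.succAbove := by
      ext p q
      simp [border, Matrix.submatrix_apply, Fin.succ_succAbove_succ]
    rw [e1, e2, mul_one]
  unfold cofsum
  rw [Finset.sum_comm, ← Finset.sum_neg_distrib]
  refine Finset.sum_congr rfl fun k _ => ?_
  have h1 : border A 0 (Fin.succ k) = 1 := rfl
  rw [key k, h1, mul_one, ← Finset.sum_neg_distrib, Finset.mul_sum]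
  refine Finset.sum_congr rfl fun i _ => ?_
  have hv : ((Fin.succ k : Fin (m+2)) : ℕ) = (k:ℕ)+1 := Fin.val_succ k
  rw [hv, pow_add, pow_add, pow_one]
  ring

private def Lmat {m : ℕ} (v : Fin (m+2) → ℝ) : Matrix (Fin (m+2)) (Fin (m+2)) ℝ :=
  Matrix.of fun i j => (if i = j then (1:ℝ) else 0) + (if j = 0 then v i else 0)

private theorem Lmat_mul {m : ℕ} (v : Fin (m+2) → ℝ) (X : Matrix (Fin (m+2)) (Fin (m+2)) ℝ)
    (i j : Fin (m+2)) : (Lmat v * X) i j = X i j + v i * X 0 j := by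
  rw [Matrix.mul_apply]
  simp [Lmat, add_mul, ite_mul, Finset.sum_add_distrib, Finset.sum_ite_eq, Finset.sum_ite_eq']

private theorem mul_LmatT {m : ℕ} (v : Fin (m+2) → ℝ) (X : Matrix (Fin (m+2)) (Fin (m+2)) ℝ)
    (i j : Fin (m+2)) : (X * (Lmat v)ᵀ) i j = X i j + v j * X i 0 := by
  rw [Matrix.mul_apply]
  simp [Lmat, mul_add, mul_ite, Finset.sum_add_distrib, Finset.sum_ite_eq, Finset.sum_ite_eq',
    mul_comm]

private theorem det_Lmat {m : ℕ} (v : Fin (m+2) → ℝ) (hv : v 0 = 0) :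
    (Lmat v).det = 1 := by
  have h : (Lmat v).BlockTriangular OrderDual.toDual := by
    intro i j hij
    have h1 : ¬ i = j := by
      intro h; subst h; exact lt_irrefl _ hij
    have h2 : ¬ j = 0 := by
      intro h; subst h; exact (Fin.not_lt_zero _ (by exact_mod_cast hij)).elim
    simp [Lmat, h1, h2]
  rw [Matrix.det_of_lowerTriangular _ h]
  refine Finset.prod_eq_one fun i _ => ?_
  by_cases hi : i = 0
  · subst hi; simp [Lmat, hv]
  · simp [Lmat, hi]

private theorem border_shift {m : ℕ} (M : Matrix (Fin (m+1)) (Fin (m+1)) ℝ)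
    (s : Fin (m+1) → ℝ) :
    border (Matrix.of fun i j => M i j + s i + s j)
      = Lmat (Fin.cons 0 s) * border M * (Lmat (Fin.cons 0 s))ᵀ := by
  ext i j
  rw [mul_LmatT, Lmat_mul, Lmat_mul]
  induction i using Fin.cases with
  | zero =>
    induction j using Fin.cases with
    | zero => simp [border]
    | succ j => simp [border]
  | succ i =>
    induction j using Fin.cases with
    | zero => simp [border]
    | succ j => simp [border]

private theorem cofsum_of_zero_border {m : ℕ} (M : Matrix (Fin (m+1)) (Fin (m+1)) ℝ)
    (hrow : ∀ j, M 0 j = 0) (hcol : ∀ i, M i 0 = 0) :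
    cofsum M = (M.submatrix Fin.succ Fin.succ).det := by
  unfold cofsum
  rw [Fin.sum_univ_succ]
  have hz : ∀ i : Fin m, ∑ j : Fin (m+1), (-1:ℝ)^(((Fin.succ i : Fin (m+1)):ℕ)+(j:ℕ)) *
      (M.submatrix (Fin.succ i).succAbove j.succAbove).det = 0 := by
    intro i
    refine Finset.sum_eq_zero fun j _ => ?_
    have : (M.submatrix (Fin.succ i).succAbove j.succAbove).det = 0 := by
      refine Matrix.det_eq_zero_of_row_eq_zero ⟨0, i.pos⟩ fun q => ?_
      have h0 : (Fin.succ i).succAbove ⟨0, i.pos⟩ = 0 := by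
        rw [Fin.succAbove_of_castSucc_lt _ _ (by exact Fin.succ_pos i)]; rfl
      rw [Matrix.submatrix_apply, h0]
      exact hrow _
    rw [this, mul_zero]
  rw [Finset.sum_congr rfl (fun i _ => hz i), Finset.sum_const, smul_zero, add_zero]
  rw [Fin.sum_univ_succ]
  have hz2 : ∀ j : Fin m, (-1:ℝ)^(((0:Fin (m+1)):ℕ)+((Fin.succ j : Fin (m+1)):ℕ)) *
      (M.submatrix (0:Fin (m+1)).succAbove (Fin.succ j).succAbove).det = 0 := by
    intro j
    have : (M.submatrix (0:Fin (m+1)).succAbove (Fin.succ j).succAbove).det = 0 := by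
      refine Matrix.det_eq_zero_of_column_eq_zero ⟨0, j.pos⟩ fun q => ?_
      have h0 : (Fin.succ j).succAbove ⟨0, j.pos⟩ = 0 := by
        rw [Fin.succAbove_of_castSucc_lt _ _ (by exact Fin.succ_pos j)]; rfl
      rw [Matrix.submatrix_apply, h0]
      exact hcol _
    rw [this, mul_zero]
  rw [Finset.sum_congr rfl (fun j _ => hz2 j), Finset.sum_const, smul_zero, add_zero]
  simp [Fin.succAbove_zero]

/-- Formula for the cofactor sum of the distance matrix of an `(n+1)`-point subset
of a weighted Hamming cube containing `0`. -/
theorem stmt10 (n : ℕ) (hn : 1 ≤ n) (w : Fin n → ℝ) (hw : ∀ k, 0 < w k)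
    (x : Fin (n + 1) → (Fin n → ℝ))
    (hx0 : x 0 = 0)
    (hxH : ∀ i k, x i k = 0 ∨ x i k = w k)
    (hinj : Function.Injective x)
    (D : Matrix (Fin (n + 1)) (Fin (n + 1)) ℝ)
    (hD : ∀ i j, D i j = ∑ k, |x i k - x j k|)
    (B : Matrix (Fin n) (Fin n) ℝ)
    (hB : ∀ i k, B i k = x i.succ k / w k) :
    ∑ i : Fin (n + 1), ∑ j : Fin (n + 1), (-1 : ℝ) ^ ((i : ℕ) + (j : ℕ)) *
        (D.submatrix i.succAbove j.succAbove).det =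
      (-1 : ℝ) ^ n * 2 ^ n * (∏ k, w k) * B.det ^ 2 := by
  have hwne : ∀ k, w k ≠ 0 := fun k => ne_of_gt (hw k)
  set b : Fin (n+1) → Fin n → ℝ := fun i k => x i k / w k with hbdef
  have hxb : ∀ i k, x i k = w k * b i k := by
    intro i k; simp only [hbdef]
    rw [mul_comm, div_mul_cancel₀ _ (hwne k)]
  have hb01 : ∀ i k, b i k = 0 ∨ b i k = 1 := by
    intro i k
    rcases hxH i k with h | h
    · left; simp [hbdef, h]
    · right; simp [hbdef, h, hwne k]
  have hb0 : ∀ k, b 0 k = 0 := by intro k; simp [hbdef, hx0]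
  set s : Fin (n+1) → ℝ := fun i => ∑ k, w k * b i k with hsdef
  have habs : ∀ i j k, |x i k - x j k|
      = w k * b i k + w k * b j k - 2 * (w k * (b i k * b j k)) := by
    intro i j k
    rw [hxb i k, hxb j k]
    rcases hb01 i k with h1 | h1 <;> rcases hb01 j k with h2 | h2 <;> rw [h1, h2]
    · simp
    · rw [mul_zero, mul_one, zero_sub, abs_neg, abs_of_pos (hw k)]; ring
    · rw [mul_zero, mul_one, sub_zero, abs_of_pos (hw k)]; ring
    · rw [mul_one, mul_one, sub_self, abs_zero]; ring
  have hD' : ∀ i j, D i j = s i + s j - 2 * ∑ k, w k * (b i k * b j k) := by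
    intro i j
    rw [hD, Finset.sum_congr rfl fun k _ => habs i j k]
    simp [Finset.sum_sub_distrib, Finset.sum_add_distrib, Finset.mul_sum, hsdef]
  set M : Matrix (Fin (n+1)) (Fin (n+1)) ℝ :=
    Matrix.of (fun i j => -2 * ∑ k, w k * (b i k * b j k)) with hMdef
  have hDM : D = Matrix.of fun i j => M i j + s i + s j := by
    ext i j
    rw [hD' i j]
    simp only [hMdef, Matrix.of_apply]
    ring
  have hMrow : ∀ j, M 0 j = 0 := by intro j; simp [hMdef, hb0]
  have hMcol : ∀ i, M i 0 = 0 := by intro i; simp [hMdef, hb0]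
  have h1 : cofsum D = cofsum M := by
    have e : (border D).det = (border M).det := by
      rw [hDM, border_shift M s, Matrix.det_mul, Matrix.det_mul,
        det_Lmat _ (by simp), Matrix.det_transpose, det_Lmat _ (by simp)]
      ring
    have e1 := det_border D
    have e2 := det_border M
    rw [e1, e2] at e
    linarith
  have h2 : cofsum M = (M.submatrix Fin.succ Fin.succ).det :=
    cofsum_of_zero_border M hMrow hMcol
  have hBb : ∀ i k, B i k = b i.succ k := by
    intro i k; rw [hB]
  have h3 : M.submatrix Fin.succ Fin.succ = (-2 : ℝ) • (B * Matrix.diagonal w * Bᵀ) := by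
    ext i j
    rw [Matrix.submatrix_apply, Matrix.smul_apply, Matrix.mul_apply]
    simp only [hMdef, Matrix.of_apply, Matrix.mul_diagonal, Matrix.transpose_apply, hBb,
      smul_eq_mul, Finset.mul_sum]
    exact Finset.sum_congr rfl fun k _ => by ring
  have h4 : (M.submatrix Fin.succ Fin.succ).det
      = (-2:ℝ)^n * (B.det * ((∏ k, w k) * B.det)) := by
    rw [h3, Matrix.det_smul, Matrix.det_mul, Matrix.det_mul, Matrix.det_diagonal,
      Matrix.det_transpose]
    simp [Fintype.card_fin]
    ring
  show cofsum D = _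
  rw [h1, h2, h4, neg_pow]
  ring
end

section
/- Let Y be a real inner product space and let x_0, …, x_m be distinct points of Y. Then the following are equivalent: (i) the family (x_0,…,x_m) is affinely dependent (i.e. not affinely independent over ℝ); (ii) there exists a nonzero ξ ∈ ℝ^{m+1} with ∑_i ξ_i = 0 and ∑_i ξ_i x_i = 0; (iii) there exists a nonzero ξ ∈ ℝ^{m+1} with ∑_i ξ_i = 0 and ∑_{i,j} ξ_i ξ_j ‖x_i − x_j‖² = 0 (i.e. {x_0,…,x_m} admits a nontrivial 2-polygonal equality). -/
/-! When the weights `ξ` sum to zero, expanding the squared distances gives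
`∑ i, ∑ j, ξ i * ξ j * ‖x i - x j‖ ^ 2 = -2 * ‖∑ i, ξ i • x i‖ ^ 2`, so a nontrivial
2-polygonal equality is the same as a nontrivial affine dependence among the points. -/

open Finset

theorem not_affineIndependent_iff_exists_sum_smul_eq_zero {k V ι : Type*} [Ring k]
    [AddCommGroup V] [Module k V] [Fintype ι] {p : ι → V} :
    ¬ AffineIndependent k p ↔ ∃ w : ι → k, w ≠ 0 ∧ ∑ i, w i = 0 ∧ ∑ i, w i • p i = 0 := by
  rw [affineIndependent_iff_of_fintype]
  push Not
  refine exists_congr fun w => ?_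
  rw [Function.ne_iff]
  constructor
  · rintro ⟨hw, hp, hne⟩
    exact ⟨hne, hw, by rwa [univ.weightedVSub_eq_linear_combination hw] at hp⟩
  · rintro ⟨hne, hw, hp⟩
    exact ⟨hw, by rwa [univ.weightedVSub_eq_linear_combination hw], hne⟩

theorem sum_sum_mul_mul_norm_sub_sq_of_sum_eq_zero {F ι : Type*} [NormedAddCommGroup F]
    [InnerProductSpace ℝ F] [Fintype ι] (x : ι → F) {ξ : ι → ℝ} (hξ : ∑ i, ξ i = 0) :
    ∑ i, ∑ j, ξ i * ξ j * ‖x i - x j‖ ^ 2 = -2 * ‖∑ i, ξ i • x i‖ ^ 2 := by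
  rw [← real_inner_self_eq_norm_sq, inner_sum_smul_sum_smul_of_sum_eq_zero x hξ x hξ]
  simp only [sq]
  ring

theorem sum_sum_mul_mul_norm_sub_sq_eq_zero_iff {F ι : Type*} [NormedAddCommGroup F]
    [InnerProductSpace ℝ F] [Fintype ι] (x : ι → F) {ξ : ι → ℝ} (hξ : ∑ i, ξ i = 0) :
    ∑ i, ∑ j, ξ i * ξ j * ‖x i - x j‖ ^ 2 = 0 ↔ ∑ i, ξ i • x i = 0 := by
  rw [sum_sum_mul_mul_norm_sub_sq_of_sum_eq_zero x hξ]
  simp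

theorem stmt13_general (Y : Type*) [NormedAddCommGroup Y] [InnerProductSpace ℝ Y]
    (m : ℕ) (x : Fin (m + 1) → Y) :
    (¬ AffineIndependent ℝ x ↔
      (∃ ξ : Fin (m + 1) → ℝ, ξ ≠ 0 ∧ ∑ i, ξ i = 0 ∧ ∑ i, ξ i • x i = 0)) ∧
    (¬ AffineIndependent ℝ x ↔
      (∃ ξ : Fin (m + 1) → ℝ, ξ ≠ 0 ∧ ∑ i, ξ i = 0 ∧
        ∑ i, ∑ j, ξ i * ξ j * ‖x i - x j‖ ^ 2 = 0)) := by
  refine ⟨not_affineIndependent_iff_exists_sum_smul_eq_zero,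
    not_affineIndependent_iff_exists_sum_smul_eq_zero.trans (exists_congr fun ξ => ?_)⟩
  exact and_congr_right' (and_congr_right fun hξ =>
    (sum_sum_mul_mul_norm_sub_sq_eq_zero_iff x hξ).symm)

/-- In a real inner product space, a finite family of distinct points is affinely
dependent iff some nonzero weights summing to zero annihilate the points, iff the
points admit a nontrivial 2-polygonal equality. -/
theorem stmt13 (Y : Type*) [NormedAddCommGroup Y] [InnerProductSpace ℝ Y]
    (m : ℕ) (x : Fin (m + 1) → Y) (hinj : Function.Injective x) :
    (¬ AffineIndependent ℝ x ↔
      (∃ ξ : Fin (m + 1) → ℝ, ξ ≠ 0 ∧ ∑ i, ξ i = 0 ∧ ∑ i, ξ i • x i = 0)) ∧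
    (¬ AffineIndependent ℝ x ↔
      (∃ ξ : Fin (m + 1) → ℝ, ξ ≠ 0 ∧ ∑ i, ξ i = 0 ∧
        ∑ i, ∑ j, ξ i * ξ j * ‖x i - x j‖ ^ 2 = 0)) :=
  stmt13_general Y m x
end

section
/- Let x_0, …, x_m be distinct points of the weighted Hamming cube H_W, let D be their distance matrix, and let ξ ∈ ℝ^{m+1} satisfy ∑_i ξ_i = 0. Then the following are equivalent: (i) ∑_i ξ_i x_i = 0 in ℝⁿ; (ii) ∑_{i,j} d(x_i,x_j) ξ_i ξ_j = 0; (iii) D ξ = 0 (ξ regarded as a column vector). -/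
/-- Characterization of nontrivial 1-polygonal equalities in a weighted Hamming
cube: for weights summing to zero, vanishing of the weighted sum of the points,
vanishing of the quadratic form, and membership in the kernel of the distance
matrix are all equivalent. -/
theorem stmt15 (n m : ℕ) (hn : 1 ≤ n) (w : Fin n → ℝ) (hw : ∀ k, 0 < w k)
    (x : Fin (m + 1) → (Fin n → ℝ))
    (hxH : ∀ i k, x i k = 0 ∨ x i k = w k)
    (hinj : Function.Injective x)
    (D : Matrix (Fin (m + 1)) (Fin (m + 1)) ℝ)
    (hD : ∀ i j, D i j = ∑ k, |x i k - x j k|)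
    (ξ : Fin (m + 1) → ℝ) (hξ : ∑ i, ξ i = 0) :
    ((∑ i, ξ i • x i = 0) ↔
      ∑ i, ∑ j, (∑ k, |x i k - x j k|) * ξ i * ξ j = 0) ∧
    ((∑ i, ∑ j, (∑ k, |x i k - x j k|) * ξ i * ξ j = 0) ↔
      D.mulVec ξ = 0) := by
  have habs : ∀ i j k, |x i k - x j k| = x i k + x j k - 2 * (x i k * x j k) / w k := by
    intro i j k
    have hne : w k ≠ 0 := (hw k).ne'
    rcases hxH i k with h1 | h1 <;> rcases hxH j k with h2 | h2 <;> rw [h1, h2]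
    · simp
    · rw [zero_sub, abs_neg, abs_of_pos (hw k)]; ring
    · rw [sub_zero, abs_of_pos (hw k)]; ring
    · rw [sub_self, abs_zero]; field_simp; ring
  set s : Fin n → ℝ := fun k => ∑ i, x i k * ξ i with hs
  have hsk : ∀ k, (∑ i, x i k * ξ i) = s k := fun k => rfl
  -- the quadratic form equals -∑ k, (2 / w k) * (s k)^2
  have hQ : (∑ i, ∑ j, (∑ k, |x i k - x j k|) * ξ i * ξ j)
      = ∑ k, -((2 / w k) * (s k) ^ 2) := by
    have step1 : ∀ i j, (∑ k, |x i k - x j k|) * ξ i * ξ j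
        = ∑ k, ((x i k * ξ i) * ξ j + ξ i * (x j k * ξ j)
            - (2 / w k) * ((x i k * ξ i) * (x j k * ξ j))) := by
      intro i j
      rw [Finset.sum_mul, Finset.sum_mul]
      refine Finset.sum_congr rfl fun k _ => ?_
      rw [habs i j k]; ring
    calc (∑ i, ∑ j, (∑ k, |x i k - x j k|) * ξ i * ξ j)
        = ∑ i, ∑ j, ∑ k, ((x i k * ξ i) * ξ j + ξ i * (x j k * ξ j)
            - (2 / w k) * ((x i k * ξ i) * (x j k * ξ j))) := by
          simp only [step1]
      _ = ∑ k, ∑ i, ∑ j, ((x i k * ξ i) * ξ j + ξ i * (x j k * ξ j)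
            - (2 / w k) * ((x i k * ξ i) * (x j k * ξ j))) := by
          rw [show (∑ i, ∑ j, ∑ k, ((x i k * ξ i) * ξ j + ξ i * (x j k * ξ j)
              - (2 / w k) * ((x i k * ξ i) * (x j k * ξ j))))
            = ∑ i, ∑ k, ∑ j, ((x i k * ξ i) * ξ j + ξ i * (x j k * ξ j)
              - (2 / w k) * ((x i k * ξ i) * (x j k * ξ j)))
            from Finset.sum_congr rfl fun i _ => Finset.sum_comm]
          exact Finset.sum_comm
      _ = ∑ k, -((2 / w k) * (s k) ^ 2) := by
          refine Finset.sum_congr rfl fun k _ => ?_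
          have h1 : ∀ i, ∑ j, ((x i k * ξ i) * ξ j + ξ i * (x j k * ξ j)
              - (2 / w k) * ((x i k * ξ i) * (x j k * ξ j)))
              = (x i k * ξ i) * (∑ j, ξ j) + ξ i * s k
                - (2 / w k) * ((x i k * ξ i) * s k) := by
            intro i
            rw [Finset.sum_sub_distrib, Finset.sum_add_distrib, ← Finset.mul_sum,
              ← Finset.mul_sum, ← Finset.mul_sum, ← Finset.mul_sum, hsk k]
          simp only [h1, hξ, mul_zero, zero_add]
          rw [Finset.sum_sub_distrib, ← Finset.sum_mul, hξ, zero_mul, zero_sub,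
            ← Finset.mul_sum]
          have : (∑ i, x i k * ξ i * s k) = (∑ i, x i k * ξ i) * s k := by
            rw [Finset.sum_mul]
          rw [this, hsk k]
          ring
  have hQ0 : (∑ i, ∑ j, (∑ k, |x i k - x j k|) * ξ i * ξ j = 0) ↔ ∀ k, s k = 0 := by
    rw [hQ]
    have hneg : (∑ k, -((2 / w k) * (s k) ^ 2)) = -∑ k, (2 / w k) * (s k) ^ 2 := by
      rw [Finset.sum_neg_distrib]
    rw [hneg, neg_eq_zero,
      Finset.sum_eq_zero_iff_of_nonneg (fun k _ => mul_nonneg (div_pos two_pos (hw k)).le (sq_nonneg _))]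
    constructor
    · intro h k
      have h2 := h k (Finset.mem_univ k)
      have hw2 : (2 : ℝ) / w k ≠ 0 := (div_pos two_pos (hw k)).ne'
      have hs2 : s k ^ 2 = 0 := by
        rcases mul_eq_zero.mp h2 with h' | h'
        · exact absurd h' hw2
        · exact h'
      exact (pow_eq_zero_iff (by norm_num : (2 : ℕ) ≠ 0)).mp hs2
    · intro h k _
      rw [h k]; ring
  have hsum : (∑ i, ξ i • x i = 0) ↔ ∀ k, s k = 0 := by
    have happ : ∀ k, (∑ i, ξ i • x i) k = s k := by
      intro k
      rw [Finset.sum_apply]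
      simp only [Pi.smul_apply, smul_eq_mul]
      rw [← hsk k]
      exact Finset.sum_congr rfl fun i _ => mul_comm _ _
    constructor
    · intro h k
      rw [← happ k, h]; rfl
    · intro h
      funext k
      rw [happ k, h k]; rfl
  have hmul : (∀ k, s k = 0) → D.mulVec ξ = 0 := by
    intro h
    funext i
    show ∑ j, D i j * ξ j = 0
    calc ∑ j, D i j * ξ j
        = ∑ j, ∑ k, (x i k * ξ j + x j k * ξ j - (2 * x i k / w k) * (x j k * ξ j)) := by
          refine Finset.sum_congr rfl fun j _ => ?_
          rw [hD, Finset.sum_mul]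
          refine Finset.sum_congr rfl fun k _ => ?_
          rw [habs]; ring
      _ = ∑ k, ∑ j, (x i k * ξ j + x j k * ξ j - (2 * x i k / w k) * (x j k * ξ j)) :=
          Finset.sum_comm
      _ = ∑ k, (x i k * (∑ j, ξ j) + s k - (2 * x i k / w k) * s k) := by
          refine Finset.sum_congr rfl fun k _ => ?_
          rw [Finset.sum_sub_distrib, Finset.sum_add_distrib, ← Finset.mul_sum,
            ← Finset.mul_sum, hsk k]
      _ = 0 := Finset.sum_eq_zero fun k _ => by rw [hξ, h k]; ring
  have hback : D.mulVec ξ = 0 →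
      (∑ i, ∑ j, (∑ k, |x i k - x j k|) * ξ i * ξ j = 0) := by
    intro h0
    refine Finset.sum_eq_zero fun i _ => ?_
    have hmv : (D.mulVec ξ) i = 0 := by rw [h0]; rfl
    calc ∑ j, (∑ k, |x i k - x j k|) * ξ i * ξ j
        = ξ i * ∑ j, D i j * ξ j := by
          rw [Finset.mul_sum]
          refine Finset.sum_congr rfl fun j _ => ?_
          rw [hD]; ring
      _ = ξ i * (D.mulVec ξ) i := rfl
      _ = 0 := by rw [hmv, mul_zero]
  exact ⟨hsum.trans hQ0.symm, ⟨fun h => hmul (hQ0.mp h), hback⟩⟩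
end
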